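/- Let ρ and σ be positive semidefinite matrices on a finite-dimensional Hilbert space and Π an orthogonal projection. Then ‖√(ΠρΠ)√σ‖₁ = ‖√ρ√(ΠσΠ)‖₁ = ‖√(ΠρΠ)√(ΠσΠ)‖₁. Moreover, for any positive semidefinite ω with ω ≥ ρ in the Loewner order, ‖√ω√σ‖₁ ≥ ‖√ρ√σ‖₁. -/

import Mathlib

open scoped Matrix Kronecker BigOperators
open Matrix
open scoped ComplexOrder Classical

namespace Paper

/-- Total positive semidefinite square root (junk value `0` off the PSD cone). -/
noncomputable def psqrt {n : Type*} [Fintype n] [DecidableEq n] (A : Matrix n n ℂ) :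
    Matrix n n ℂ :=
  if h : A.PosSemidef then
    (h.1.eigenvectorUnitary : Matrix n n ℂ) *
      Matrix.diagonal ((↑) ∘ (fun x : ℝ => Real.sqrt x) ∘ h.1.eigenvalues) *
      (star h.1.eigenvectorUnitary : Matrix n n ℂ)
  else 0

/-- Trace norm `‖A‖₁ = Tr √(AᴴA)`. -/
noncomputable def traceNorm {n : Type*} [Fintype n] [DecidableEq n] (A : Matrix n n ℂ) : ℝ :=
  (psqrt (Aᴴ * A)).trace.re

/-- Fidelity `F(ρ,σ) = ‖√ρ√σ‖₁` of positive semidefinite matrices. -/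
noncomputable def fidelity {n : Type*} [Fintype n] [DecidableEq n] (ρ σ : Matrix n n ℂ) : ℝ :=
  traceNorm (psqrt ρ * psqrt σ)

/-- Purified distance `P(ρ,σ) = √(1 - F(ρ,σ)²)`. -/
noncomputable def purDist {n : Type*} [Fintype n] [DecidableEq n] (ρ σ : Matrix n n ℂ) : ℝ :=
  Real.sqrt (1 - fidelity ρ σ ^ 2)

/-- A state (density matrix): positive semidefinite with unit trace. -/
def IsState {n : Type*} [Fintype n] (ρ : Matrix n n ℂ) : Prop :=
  ρ.PosSemidef ∧ ρ.trace = 1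

/-- A probability mass function on a finite alphabet. -/
def IsPMF {X : Type*} [Fintype X] (p : X → ℝ) : Prop :=
  (∀ x, 0 ≤ p x) ∧ ∑ x, p x = 1

/-- Support inclusion `supp ρ ⊆ supp σ`, phrased via kernels (equivalent for PSD matrices). -/
def SuppSubset {n : Type*} [Fintype n] (ρ σ : Matrix n n ℂ) : Prop :=
  ∀ v : n → ℂ, σ.mulVec v = 0 → ρ.mulVec v = 0

/-- Loewner order `A ≤ B`. -/
def LLE {n : Type*} [Fintype n] (A B : Matrix n n ℂ) : Prop := (B - A).PosSemidef

/-- Binary logarithm of a Hermitian matrix, taken on its support via functional calculus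
(`Real.logb 2 0 = 0` takes care of the kernel). -/
noncomputable def matLog {n : Type*} [Fintype n] [DecidableEq n] (A : Matrix n n ℂ) :
    Matrix n n ℂ :=
  if hA : A.IsHermitian then
    (hA.eigenvectorUnitary : Matrix n n ℂ) *
      Matrix.diagonal (fun i => (Real.logb 2 (hA.eigenvalues i) : ℂ)) *
      (star (hA.eigenvectorUnitary : Matrix n n ℂ))
  else 0

/-- Quantum relative entropy (base 2): `D(ρ‖σ) = Tr(ρ log₂ ρ) - Tr(ρ log₂ σ)`. -/
noncomputable def relEnt {n : Type*} [Fintype n] [DecidableEq n] (ρ σ : Matrix n n ℂ) : ℝ :=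
  ((ρ * matLog ρ).trace - (ρ * matLog σ).trace).re

/-- Max-relative entropy `D_max(ρ‖σ) = inf {λ | ρ ≤ 2^λ σ}`. -/
noncomputable def dMax {n : Type*} [Fintype n] (ρ σ : Matrix n n ℂ) : ℝ :=
  sInf {l : ℝ | LLE ρ ((2 : ℝ) ^ l • σ)}

/-- Smooth max-relative entropy `D_max^ε(ρ‖σ) = min_{ρ' ∈ B^ε(ρ)} D_max(ρ'‖σ)`. -/
noncomputable def dMaxSmooth {n : Type*} [Fintype n] [DecidableEq n]
    (ε : ℝ) (ρ σ : Matrix n n ℂ) : ℝ :=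
  sInf {d : ℝ | ∃ ρ' : Matrix n n ℂ, IsState ρ' ∧ purDist ρ' ρ ≤ ε ∧ d = dMax ρ' σ}

/-- Partial trace over the second (B) factor. -/
noncomputable def ptraceB {a b : Type*} [Fintype b]
    (M : Matrix (a × b) (a × b) ℂ) : Matrix a a ℂ :=
  Matrix.of fun i j => ∑ k : b, M (i, k) (j, k)

/-- Partial trace over the first (A) factor. -/
noncomputable def ptraceA {a b : Type*} [Fintype a]
    (M : Matrix (a × b) (a × b) ℂ) : Matrix b b ℂ :=
  Matrix.of fun i j => ∑ k : a, M (k, i) (k, j)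

/-- The cq state `Σ_x p(x) |x⟩⟨x| ⊗ ρ_x`. -/
noncomputable def cqState {X d : Type*} [Fintype X] [DecidableEq X] [Fintype d] [DecidableEq d]
    (p : X → ℝ) (ρ : X → Matrix d d ℂ) : Matrix (X × d) (X × d) ℂ :=
  ∑ x, p x • (Matrix.single x x (1 : ℂ) ⊗ₖ ρ x)

/-- The Markov state `ρ^{A-X-B} = Σ_x p(x)|x⟩⟨x| ⊗ ρ_x^A ⊗ ρ_x^B` of a cq state. -/
noncomputable def markovState {X a b : Type*} [Fintype X] [DecidableEq X]
    [Fintype a] [DecidableEq a] [Fintype b] [DecidableEq b]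
    (p : X → ℝ) (ρ : X → Matrix (a × b) (a × b) ℂ) :
    Matrix (X × (a × b)) (X × (a × b)) ℂ :=
  cqState p fun x => ptraceB (ρ x) ⊗ₖ ptraceA (ρ x)

/-- Conditional mutual information `I(A;B|X)_ρ = D(ρ^{XAB} ‖ ρ^{A-X-B})` of a cq state. -/
noncomputable def condMI {X a b : Type*} [Fintype X] [DecidableEq X]
    [Fintype a] [DecidableEq a] [Fintype b] [DecidableEq b]
    (p : X → ℝ) (ρ : X → Matrix (a × b) (a × b) ℂ) : ℝ :=
  relEnt (cqState p ρ) (markovState p ρ)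

/-- `D_max^ε(A;B|X)_ρ = D_max^ε(ρ^{XAB} ‖ ρ^{A-X-B})` of a cq state. -/
noncomputable def condDmaxSmooth {X a b : Type*} [Fintype X] [DecidableEq X]
    [Fintype a] [DecidableEq a] [Fintype b] [DecidableEq b]
    (ε : ℝ) (p : X → ℝ) (ρ : X → Matrix (a × b) (a × b) ℂ) : ℝ :=
  dMaxSmooth ε (cqState p ρ) (markovState p ρ)

/-- `Ĩ_max^ε(A;B|X)_ρ`: minimum of `D_max(ρ' ‖ Σ_x p'(x)|x⟩⟨x| ⊗ ρ'^A_x ⊗ ρ^B_x)` over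
cq states `ρ'` in the ε-ball around `ρ^{XAB}`. -/
noncomputable def condImaxTilde {X a b : Type*} [Fintype X] [DecidableEq X]
    [Fintype a] [DecidableEq a] [Fintype b] [DecidableEq b]
    (ε : ℝ) (p : X → ℝ) (ρ : X → Matrix (a × b) (a × b) ℂ) : ℝ :=
  sInf {d : ℝ | ∃ (p' : X → ℝ) (ρ' : X → Matrix (a × b) (a × b) ℂ),
    IsPMF p' ∧ (∀ x, IsState (ρ' x)) ∧
    purDist (cqState p' ρ') (cqState p ρ) ≤ ε ∧
    d = dMax (cqState p' ρ') (cqState p' fun x => ptraceB (ρ' x) ⊗ₖ ptraceA (ρ x))}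

/-- `Ĩ_max^ε(A;B)_ρ = inf_{ρ' ∈ B^ε(ρ)} D_max(ρ' ‖ ρ'^A ⊗ ρ^B)` for a bipartite state. -/
noncomputable def bipImaxTilde {a b : Type*} [Fintype a] [DecidableEq a]
    [Fintype b] [DecidableEq b] (ε : ℝ) (ρ : Matrix (a × b) (a × b) ℂ) : ℝ :=
  sInf {d : ℝ | ∃ ρ' : Matrix (a × b) (a × b) ℂ, IsState ρ' ∧ purDist ρ' ρ ≤ ε ∧
    d = dMax ρ' (ptraceB ρ' ⊗ₖ ptraceA ρ)}

/-- The binary entropy function. -/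
noncomputable def binEnt (ε : ℝ) : ℝ :=
  -(ε * Real.logb 2 ε) - (1 - ε) * Real.logb 2 (1 - ε)

/-- Hypothesis testing relative entropy `D_H^ε(ρ‖σ)`. -/
noncomputable def dH {n : Type*} [Fintype n] [DecidableEq n] (ε : ℝ) (ρ σ : Matrix n n ℂ) : ℝ :=
  sSup {d : ℝ | ∃ Λ : Matrix n n ℂ, Λ.PosSemidef ∧ (1 - Λ).PosSemidef ∧
    1 - ε ≤ ((Λ * ρ).trace).re ∧ d = -Real.logb 2 (((Λ * σ).trace).re)}

/-- The convex-split state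
`τ^{XAB₁…Bₙ} = Σ_x p(x)|x⟩⟨x| ⊗ (1/n) Σ_j ρ_x^{AB_j} ⊗ (⊗_{i≠j} σ_x^{B_i})`,
written entrywise on the index type `X × (A × Bⁿ)`. -/
noncomputable def tauState {X a b : Type*} [Fintype X] [DecidableEq X]
    [Fintype a] [Fintype b]
    (p : X → ℝ) (ρ : X → Matrix (a × b) (a × b) ℂ) (σ : X → Matrix b b ℂ) (nn : ℕ) :
    Matrix (X × (a × (Fin nn → b))) (X × (a × (Fin nn → b))) ℂ :=
  Matrix.of fun q q' =>
    (if q.1 = q'.1 then (p q.1 : ℂ) else 0) *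
      ((nn : ℂ)⁻¹ * ∑ j : Fin nn,
        ρ q.1 (q.2.1, q.2.2 j) (q'.2.1, q'.2.2 j) *
          ∏ i ∈ Finset.univ.erase j, σ q.1 (q.2.2 i) (q'.2.2 i))

/-- The product reference state
`Σ_x p(x)|x⟩⟨x| ⊗ ρ_x^A ⊗ σ_x^{B₁} ⊗ … ⊗ σ_x^{Bₙ}`, entrywise. -/
noncomputable def refState {X a b : Type*} [Fintype X] [DecidableEq X]
    [Fintype a] [Fintype b]
    (p : X → ℝ) (ρ : X → Matrix (a × b) (a × b) ℂ) (σ : X → Matrix b b ℂ) (nn : ℕ) :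
    Matrix (X × (a × (Fin nn → b))) (X × (a × (Fin nn → b))) ℂ :=
  Matrix.of fun q q' =>
    (if q.1 = q'.1 then (p q.1 : ℂ) else 0) *
      (ptraceB (ρ q.1) q.2.1 q'.2.1 * ∏ i : Fin nn, σ q.1 (q.2.2 i) (q'.2.2 i))

end Paper

/-! Write `F(A, B) = ‖√A √B‖₁`. Since `CᴴC` and `CCᴴ` have the same characteristic polynomial,
`Tr √(CᴴC) = Tr √(CCᴴ)`; hence `F` is symmetric and `F(A, B) = Tr √(√B A √B)`. The square root
of a compression `ΠAΠ` satisfies `√(ΠAΠ) Π = √(ΠAΠ)` (its square kills the range of `1 - Π`), so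
conjugation by it absorbs `Π`: `√(ΠρΠ) σ √(ΠρΠ) = √(ΠρΠ) (ΠσΠ) √(ΠρΠ)`, and symmetrically;
this gives the two identities. Monotonicity is operator monotonicity of the square root, applied
to `√σ ρ √σ ≤ √σ ω √σ`. -/

open scoped MatrixOrder

namespace Matrix

variable {𝕜 n : Type*} [RCLike 𝕜] [Fintype n]

lemma PosSemidef.compress {A Q : Matrix n n 𝕜} (hA : A.PosSemidef) (hQ : Q.IsHermitian) :
    (Q * A * Q).PosSemidef := by
  simpa only [hQ.eq] using hA.mul_mul_conjTranspose_same Q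

variable [DecidableEq n]

lemma IsHermitian.trace_cfc {A : Matrix n n 𝕜} (hA : A.IsHermitian) (f : ℝ → ℝ) :
    (cfc f A).trace = ∑ i, (f (hA.eigenvalues i) : 𝕜) := by
  rw [hA.cfc_eq, IsHermitian.cfc, Unitary.conjStarAlgAut_apply, trace_mul_cycle,
    Unitary.coe_star_mul_self, one_mul, trace_diagonal]
  rfl

lemma IsHermitian.trace_cfc_eq_of_charpoly_eq {A B : Matrix n n 𝕜} (hA : A.IsHermitian)
    (hB : B.IsHermitian) (h : A.charpoly = B.charpoly) (f : ℝ → ℝ) :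
    (cfc f A).trace = (cfc f B).trace := by
  rw [hA.trace_cfc, hB.trace_cfc, (hA.eigenvalues_eq_eigenvalues_iff hB).2 h]

lemma conjTranspose_sqrt (A : Matrix n n 𝕜) : (CFC.sqrt A)ᴴ = CFC.sqrt A :=
  (CFC.sqrt_nonneg A).isSelfAdjoint

lemma PosSemidef.sqrt_eq_cfc {A : Matrix n n 𝕜} (hA : A.PosSemidef) :
    CFC.sqrt A = cfc Real.sqrt A := by
  rw [CFC.sqrt_eq_real_sqrt A hA.nonneg, cfcₙ_eq_cfc]

lemma trace_sqrt_conjTranspose_mul_self_eq (C : Matrix n n 𝕜) :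
    (CFC.sqrt (Cᴴ * C)).trace = (CFC.sqrt (C * Cᴴ)).trace := by
  have h₁ := posSemidef_conjTranspose_mul_self C
  have h₂ := posSemidef_self_mul_conjTranspose C
  rw [h₁.sqrt_eq_cfc, h₂.sqrt_eq_cfc]
  exact h₁.isHermitian.trace_cfc_eq_of_charpoly_eq h₂.isHermitian (charpoly_mul_comm _ _) _

lemma sqrt_mul_eq_self_of_mul_eq {R P : Matrix n n 𝕜} (hR : R.PosSemidef) (h : R * P = R) :
    CFC.sqrt R * P = CFC.sqrt R := by
  have hker : R * (1 - P) = 0 := by rw [mul_sub, h, mul_one, sub_self]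
  have : (CFC.sqrt R * (1 - P))ᴴ * (CFC.sqrt R * (1 - P)) = 0 := by
    rw [conjTranspose_mul, conjTranspose_sqrt, mul_assoc, ← mul_assoc (CFC.sqrt R),
      CFC.sqrt_mul_sqrt_self R hR.nonneg, hker, mul_zero]
  rw [conjTranspose_mul_self_eq_zero, mul_sub, mul_one, sub_eq_zero] at this
  exact this.symm

lemma sqrt_compress_mul_compress_mul_sqrt_compress {A Q : Matrix n n 𝕜} (hA : A.PosSemidef)
    (hQ : Q.IsHermitian) (hQ2 : Q * Q = Q) (X : Matrix n n 𝕜) :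
    CFC.sqrt (Q * A * Q) * (Q * X * Q) * CFC.sqrt (Q * A * Q) =
      CFC.sqrt (Q * A * Q) * X * CFC.sqrt (Q * A * Q) := by
  set T := CFC.sqrt (Q * A * Q)
  have hT : Tᴴ = T := conjTranspose_sqrt _
  have hTQ : T * Q = T :=
    sqrt_mul_eq_self_of_mul_eq (hA.compress hQ) (by rw [mul_assoc, hQ2])
  have hQT : Q * T = T := by
    simpa only [conjTranspose_mul, hQ.eq, hT] using congrArg conjTranspose hTQ
  calc T * (Q * X * Q) * T = (T * Q) * X * (Q * T) := by noncomm_ring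
    _ = T * X * T := by rw [hTQ, hQT]

open scoped Norms.L2Operator in
lemma re_trace_sqrt_le_re_trace_sqrt {A B : Matrix n n ℂ} (h : A ≤ B) :
    (CFC.sqrt A).trace.re ≤ (CFC.sqrt B).trace.re := by
  have : 0 ≤ (CFC.sqrt B - CFC.sqrt A).trace := PosSemidef.trace_nonneg (CFC.sqrt_le_sqrt A B h)
  rw [trace_sub, sub_nonneg] at this
  exact (Complex.le_def.1 this).1

end Matrix

namespace Paper

section
variable {n : Type*} [Fintype n] [DecidableEq n]

lemma psqrt_eq_sqrt (A : Matrix n n ℂ) : psqrt A = CFC.sqrt A := by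
  unfold psqrt
  split_ifs with h
  · rw [h.sqrt_eq_cfc, h.1.cfc_eq, IsHermitian.cfc, Unitary.conjStarAlgAut_apply]
    rfl
  · rw [CFC.sqrt_eq_cfc, cfc_apply_of_not_predicate]
    rwa [nonneg_iff_posSemidef]

lemma traceNorm_eq_re_trace_sqrt (C : Matrix n n ℂ) :
    traceNorm C = (CFC.sqrt (Cᴴ * C)).trace.re := by
  rw [traceNorm, psqrt_eq_sqrt]

lemma traceNorm_conjTranspose (C : Matrix n n ℂ) : traceNorm Cᴴ = traceNorm C := by
  rw [traceNorm_eq_re_trace_sqrt, traceNorm_eq_re_trace_sqrt, conjTranspose_conjTranspose,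
    trace_sqrt_conjTranspose_mul_self_eq]

lemma traceNorm_psqrt_mul_psqrt_comm (A B : Matrix n n ℂ) :
    traceNorm (psqrt A * psqrt B) = traceNorm (psqrt B * psqrt A) := by
  rw [← traceNorm_conjTranspose, conjTranspose_mul, psqrt_eq_sqrt, psqrt_eq_sqrt,
    conjTranspose_sqrt, conjTranspose_sqrt]

lemma traceNorm_psqrt_mul_psqrt {A : Matrix n n ℂ} (hA : A.PosSemidef) (B : Matrix n n ℂ) :
    traceNorm (psqrt A * psqrt B) = (CFC.sqrt (CFC.sqrt B * A * CFC.sqrt B)).trace.re := by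
  rw [traceNorm_eq_re_trace_sqrt, conjTranspose_mul, psqrt_eq_sqrt, psqrt_eq_sqrt,
    conjTranspose_sqrt, conjTranspose_sqrt,
    mul_assoc, ← mul_assoc (CFC.sqrt A), CFC.sqrt_mul_sqrt_self A hA.nonneg, ← mul_assoc]

end

/-- trace-norm identities for projections and monotonicity in the
Loewner order. -/
theorem traceNorm_sqrt_projection {d : Type*} [Fintype d] [DecidableEq d]
    (ρ σ ω : Matrix d d ℂ) (hρ : ρ.PosSemidef) (hσ : σ.PosSemidef) (hω : ω.PosSemidef)
    (Q : Matrix d d ℂ) (hQ : Q.IsHermitian) (hQ2 : Q * Q = Q) (hωρ : LLE ρ ω) :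
    traceNorm (psqrt (Q * ρ * Q) * psqrt σ) = traceNorm (psqrt ρ * psqrt (Q * σ * Q)) ∧
    traceNorm (psqrt (Q * ρ * Q) * psqrt σ) =
      traceNorm (psqrt (Q * ρ * Q) * psqrt (Q * σ * Q)) ∧
    traceNorm (psqrt ρ * psqrt σ) ≤ traceNorm (psqrt ω * psqrt σ) := by
  have hQσ : traceNorm (psqrt (Q * ρ * Q) * psqrt σ) =
      traceNorm (psqrt (Q * ρ * Q) * psqrt (Q * σ * Q)) := by
    rw [traceNorm_psqrt_mul_psqrt_comm, traceNorm_psqrt_mul_psqrt hσ,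
      traceNorm_psqrt_mul_psqrt_comm (Q * ρ * Q), traceNorm_psqrt_mul_psqrt (hσ.compress hQ),
      sqrt_compress_mul_compress_mul_sqrt_compress hρ hQ hQ2]
  have hQρ : traceNorm (psqrt ρ * psqrt (Q * σ * Q)) =
      traceNorm (psqrt (Q * ρ * Q) * psqrt (Q * σ * Q)) := by
    rw [traceNorm_psqrt_mul_psqrt hρ, traceNorm_psqrt_mul_psqrt (hρ.compress hQ),
      sqrt_compress_mul_compress_mul_sqrt_compress hσ hQ hQ2]
  refine ⟨hQσ.trans hQρ.symm, hQσ, ?_⟩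
  rw [traceNorm_psqrt_mul_psqrt hρ, traceNorm_psqrt_mul_psqrt hω]
  exact re_trace_sqrt_le_re_trace_sqrt
    (conjugate_le_conjugate_of_nonneg hωρ (CFC.sqrt_nonneg σ))

end Paper
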